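/- Let G be a connected Δ-regular finite simple graph with Δ ≤ 5, and let G* be any finite simple graph. If A(G*;x) = A(G;x) as polynomials, then G* is Δ-regular and has the same order and the same size as G. -/

import Mathlib

open Polynomial Finset

/-- Number of neighbors of `v` inside the set `S` (denoted δ_S(v)). -/
def SimpleGraph.degIn {V : Type*} [Fintype V] [DecidableEq V]
    (G : SimpleGraph V) [DecidableRel G.Adj] (S : Finset V) (v : V) : ℕ :=
  (S.filter (fun u => G.Adj v u)).card

/-- Number of neighbors of `v` outside the set `S` (denoted δ_{S̄}(v)). -/
def SimpleGraph.degOut {V : Type*} [Fintype V] [DecidableEq V]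
    (G : SimpleGraph V) [DecidableRel G.Adj] (S : Finset V) (v : V) : ℕ :=
  (Sᶜ.filter (fun u => G.Adj v u)).card

/-- `S` is an exact defensive `k`-alliance in `G`: the induced subgraph `⟨S⟩` is connected
(in particular `S` is nonempty) and `k = k_S = min_{v ∈ S} (δ_S(v) - δ_{S̄}(v))`. -/
def SimpleGraph.IsExactAlliance {V : Type*} [Fintype V] [DecidableEq V]
    (G : SimpleGraph V) [DecidableRel G.Adj] (S : Finset V) (k : ℤ) : Prop :=
  (G.induce (S : Set V)).Connected ∧
    (∀ v ∈ S, k ≤ (G.degIn S v : ℤ) - (G.degOut S v : ℤ)) ∧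
    (∃ v ∈ S, (G.degIn S v : ℤ) - (G.degOut S v : ℤ) = k)

/-- `A_k(G)`: the number of exact defensive `k`-alliances in `G`. -/
noncomputable def SimpleGraph.allianceCoeff {V : Type*} [Fintype V] [DecidableEq V]
    (G : SimpleGraph V) [DecidableRel G.Adj] (k : ℤ) : ℕ :=
  Set.ncard {S : Finset V | G.IsExactAlliance S k}

/-- The alliance polynomial `A(G;x) = Σ_{k=-Δ}^{Δ} A_k(G) x^{n+k}`, where `n` is the order and
`Δ` the maximum degree of `G`, regarded as a real polynomial. -/
noncomputable def SimpleGraph.alliancePoly {V : Type*} [Fintype V] [DecidableEq V]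
    (G : SimpleGraph V) [DecidableRel G.Adj] : Polynomial ℝ :=
  ∑ k ∈ Finset.Icc (-(G.maxDegree : ℤ)) (G.maxDegree : ℤ),
    (G.allianceCoeff k : ℝ) • X ^ (((Fintype.card V : ℤ) + k).toNat)

/-!
Comparing coefficients, `A(G*;x) = A(G;x)` says `A_k(G*) = A_{k+s}(G)` with `s = |G*| - |G|`.
For the connected `Δ`-regular `G`, `A_{-Δ}(G) = n` (the singletons), `A_Δ(G) = 1` (the whole
vertex set) and every alliance value is `≡ Δ (mod 2)`. Reading this off for `G*` shows that `G*`
has maximum degree `Δ + s` and exactly `n` vertices of maximum degree; so `s = 0` means that `G*`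
is `Δ`-regular.

If `s ≥ 1`, then `G*` has exactly one alliance of value `t = Δ - s`, and all its other alliance
values are at most `t - 2`. That alliance is the set of maximum-degree vertices; some of them,
the hubs, are adjacent to all `s` vertices of lower degree. Every maximum-degree vertex has a
hub as a neighbour, and there are at most `t - 2` hubs. For `Δ ≤ 5` this only leaves `s = 1`,
`Δ = 5`, `n ≤ 10`, and two adjacent hubs that dominate `G*`. Then `G*` has at least `2ⁿ`
connected vertex sets, whereas `G` has at most `2ⁿ - 1` of them, and both numbers are the value
of the alliance polynomial at `1`.
-/

namespace SimpleGraph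

variable {V : Type*} {G : SimpleGraph V}

def ReachableIn (G : SimpleGraph V) (S : Finset V) : V → V → Prop :=
  Relation.ReflTransGen fun x y => x ∈ S ∧ y ∈ S ∧ G.Adj x y

namespace ReachableIn

variable {S T : Finset V} {a b c : V}

lemma single (ha : a ∈ S) (hb : b ∈ S) (hab : G.Adj a b) : G.ReachableIn S a b :=
  Relation.ReflTransGen.single (show a ∈ S ∧ b ∈ S ∧ G.Adj a b from ⟨ha, hb, hab⟩)

lemma trans (h : G.ReachableIn S a b) (h' : G.ReachableIn S b c) : G.ReachableIn S a c :=
  Relation.ReflTransGen.trans h h'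

lemma symm (h : G.ReachableIn S a b) : G.ReachableIn S b a := by
  induction h with
  | refl => exact .refl
  | tail _ hstep ih => exact (single hstep.2.1 hstep.1 hstep.2.2.symm).trans ih

lemma mono (hST : S ⊆ T) (h : G.ReachableIn S a b) : G.ReachableIn T a b :=
  Relation.ReflTransGen.mono (fun _ _ hxy => ⟨hST hxy.1, hST hxy.2.1, hxy.2.2⟩) _ _ h

end ReachableIn

lemma connected_induce_iff_reachableIn {S : Finset V} :
    (G.induce (S : Set V)).Connected ↔ S.Nonempty ∧ ∀ a ∈ S, ∀ b ∈ S, G.ReachableIn S a b := by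
  rw [connected_iff]
  refine ⟨fun ⟨hpre, ⟨⟨x, hx⟩⟩⟩ => ⟨⟨x, hx⟩, fun a ha b hb => ?_⟩,
    fun ⟨⟨x, hx⟩, h⟩ => ⟨fun ⟨a, ha⟩ ⟨b, hb⟩ => ?_, ⟨⟨x, hx⟩⟩⟩⟩
  · obtain ⟨p⟩ := hpre ⟨a, ha⟩ ⟨b, hb⟩
    suffices ∀ {u v : ↥(S : Set V)}, (G.induce (S : Set V)).Walk u v → G.ReachableIn S u v from
      this p
    intro u v q
    induction q with
    | nil => exact .refl
    | @cons u v _ huv _ ih => exact (ReachableIn.single u.2 v.2 huv).trans ih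
  · induction h a ha b hb with
    | refl => rfl
    | @tail c d _ hcd ih =>
      exact (ih hcd.1).trans (Adj.reachable (G := G.induce (S : Set V))
        (u := ⟨c, hcd.1⟩) (v := ⟨d, hcd.2.1⟩) hcd.2.2)

lemma connected_induce_of_forall_reachableIn {S : Finset V} {a : V} (ha : a ∈ S)
    (h : ∀ x ∈ S, G.ReachableIn S a x) : (G.induce (S : Set V)).Connected :=
  connected_induce_iff_reachableIn.2 ⟨⟨a, ha⟩, fun x hx y hy => (h x hx).symm.trans (h y hy)⟩

lemma connected_induce_singleton (v : V) : (G.induce (({v} : Finset V) : Set V)).Connected :=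
  connected_induce_of_forall_reachableIn (mem_singleton_self v) fun _ hx =>
    mem_singleton.1 hx ▸ .refl

lemma connected_induce_of_adj_of_forall_adj {v₁ v₂ : V} (h₁₂ : G.Adj v₁ v₂)
    (hdom : ∀ x, x ≠ v₁ → x ≠ v₂ → G.Adj v₁ x ∨ G.Adj v₂ x) {S : Finset V}
    (h₁ : v₁ ∈ S) (h₂ : v₂ ∈ S) : (G.induce (S : Set V)).Connected := by
  refine connected_induce_of_forall_reachableIn h₁ fun x hx => ?_
  by_cases hx₁ : x = v₁
  · exact hx₁ ▸ .refl
  by_cases hx₂ : x = v₂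
  · exact hx₂ ▸ .single h₁ h₂ h₁₂
  rcases hdom x hx₁ hx₂ with h | h
  · exact .single h₁ hx h
  · exact (ReachableIn.single h₁ h₂ h₁₂).trans (.single h₂ hx h)

lemma connected_induce_univ [Fintype V] (hG : G.Connected) :
    (G.induce ((univ : Finset V) : Set V)).Connected := by
  obtain ⟨a⟩ := hG.nonempty
  refine connected_induce_of_forall_reachableIn (mem_univ a) fun b _ => ?_
  exact Relation.ReflTransGen.mono (fun x y hxy => ⟨mem_univ x, mem_univ y, hxy⟩) _ _
    ((reachable_iff_reflTransGen a b).1 (hG a b))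

lemma eq_univ_of_forall_adj_mem [Fintype V] (hG : G.Connected) {S : Finset V} {a : V}
    (ha : a ∈ S) (hS : ∀ x ∈ S, ∀ y, G.Adj x y → y ∈ S) : S = univ := by
  refine eq_univ_of_forall fun b => ?_
  induction (reachable_iff_reflTransGen a b).1 (hG a b) with
  | refl => exact ha
  | tail _ hxy ih => exact hS _ ih _ hxy

lemma ncard_connected_lt [Fintype V] :
    {S : Finset V | (G.induce (S : Set V)).Connected}.ncard < 2 ^ Fintype.card V := by
  have hsub : {S : Finset V | (G.induce (S : Set V)).Connected} ⊆ {∅}ᶜ := by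
    rintro S hS rfl
    exact not_nonempty_empty (connected_induce_iff_reachableIn.1 hS).1
  calc _ ≤ ({∅}ᶜ : Set (Finset V)).ncard := Set.ncard_le_ncard hsub
    _ = 2 ^ Fintype.card V - 1 := by
      rw [Set.ncard_compl, Set.ncard_singleton, Nat.card_eq_fintype_card, Fintype.card_finset]
    _ < 2 ^ Fintype.card V := Nat.sub_one_lt (Nat.two_pow_pos _).ne.symm

section Component

variable {S : Finset V} {a x y : V}

noncomputable def componentIn (G : SimpleGraph V) (S : Finset V) (a : V) : Finset V := by
  classical exact S.filter (G.ReachableIn S a)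

lemma mem_componentIn : x ∈ G.componentIn S a ↔ x ∈ S ∧ G.ReachableIn S a x := by
  classical simp [componentIn]

lemma componentIn_subset : G.componentIn S a ⊆ S := fun _ hx => (mem_componentIn.1 hx).1

lemma self_mem_componentIn (ha : a ∈ S) : a ∈ G.componentIn S a :=
  mem_componentIn.2 ⟨ha, .refl⟩

lemma mem_componentIn_of_adj (hx : x ∈ G.componentIn S a) (hy : y ∈ S) (hxy : G.Adj x y) :
    y ∈ G.componentIn S a := by
  obtain ⟨hxS, hax⟩ := mem_componentIn.1 hx
  exact mem_componentIn.2 ⟨hy, hax.trans (.single hxS hy hxy)⟩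

lemma connected_induce_componentIn (ha : a ∈ S) :
    (G.induce (G.componentIn S a : Set V)).Connected := by
  refine connected_induce_of_forall_reachableIn (self_mem_componentIn ha) fun x hx => ?_
  induction (mem_componentIn.1 hx).2 with
  | refl => exact .refl
  | @tail c d hac hcd ih =>
    have hc : c ∈ G.componentIn S a := mem_componentIn.2 ⟨hcd.1, hac⟩
    exact (ih hc).trans (.single hc (mem_componentIn_of_adj hc hcd.2.1 hcd.2.2) hcd.2.2)

/-- A set `S` with `b ∈ S` outside the component of `a` is recovered from the component minus `a`,
which avoids `b` and its neighbours, and the rest minus `b`, which avoids `a` and its neighbours. -/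
lemma card_filter_mem_sdiff_componentIn_le [DecidableEq V] [DecidableRel G.Adj]
    (Ω : Finset V) (a b : V) :
    #(Ω.powerset.filter fun S => a ∈ S ∧ b ∈ S \ G.componentIn S a) ≤
      2 ^ #(((Ω.filter (¬G.Adj b ·)).erase b).erase a) *
        2 ^ #(((Ω.filter (¬G.Adj a ·)).erase a).erase b) := by
  rw [← card_powerset, ← card_powerset, ← card_product]
  refine card_le_card_of_injOn
    (fun S => ((G.componentIn S a).erase a, (S \ G.componentIn S a).erase b)) ?_ ?_
  · intro S hS
    simp only [coe_filter, mem_powerset, Set.mem_ofPred_eq, mem_sdiff] at hS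
    obtain ⟨hSΩ, haS, hbS, hbK⟩ := hS
    simp only [coe_product, coe_powerset, Set.mem_prod, Set.mem_preimage, Set.mem_powerset_iff,
      coe_subset]
    constructor
    · intro x hx
      obtain ⟨hxa, hxK⟩ := mem_erase.1 hx
      simp only [mem_erase, mem_filter]
      exact ⟨hxa, fun hxb => hbK (hxb ▸ hxK), hSΩ (componentIn_subset hxK),
        fun hbx => hbK (mem_componentIn_of_adj hxK hbS hbx.symm)⟩
    · intro x hx
      obtain ⟨hxb, hxS, hxK⟩ := by simpa only [mem_erase, mem_sdiff] using hx
      have haK := self_mem_componentIn (G := G) haS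
      simp only [mem_erase, mem_filter]
      exact ⟨hxb, fun hxa => hxK (hxa ▸ haK), hSΩ hxS,
        fun hax => hxK (mem_componentIn_of_adj haK hxS hax)⟩
  · intro S hS T hT hST
    simp only [coe_filter, mem_powerset, Set.mem_ofPred_eq, mem_sdiff] at hS hT
    obtain ⟨hK, hB⟩ := Prod.ext_iff.1 hST
    have hK' := congrArg (insert a) hK
    have hB' := congrArg (insert b) hB
    simp only at hK' hB'
    rw [insert_erase (self_mem_componentIn hS.2.1), insert_erase (self_mem_componentIn hT.2.1)]
      at hK'
    rw [insert_erase (mem_sdiff.2 hS.2.2), insert_erase (mem_sdiff.2 hT.2.2)] at hB'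
    rw [← union_sdiff_of_subset (componentIn_subset (G := G) (S := S) (a := a)), hB', hK',
      union_sdiff_of_subset componentIn_subset]

end Component

section

variable [Fintype V] [DecidableRel G.Adj]

lemma maxDegree_le_card : G.maxDegree ≤ Fintype.card V := by
  cases isEmpty_or_nonempty V
  · exact (G.maxDegree_le_of_forall_degree_le 0 fun v => isEmptyElim v).trans (Nat.zero_le _)
  · exact G.maxDegree_lt_card_verts.le

def maxDegreeVerts (G : SimpleGraph V) [DecidableRel G.Adj] : Finset V :=
  {v | G.degree v = G.maxDegree}

lemma maxDegreeVerts_nonempty [Nonempty V] : G.maxDegreeVerts.Nonempty :=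
  let ⟨v, hv⟩ := G.exists_maximal_degree_vertex
  ⟨v, mem_filter.2 ⟨mem_univ v, hv.symm⟩⟩

lemma degree_of_mem_maxDegreeVerts {v : V} (hv : v ∈ G.maxDegreeVerts) :
    G.degree v = G.maxDegree :=
  (mem_filter.1 hv).2

lemma isRegularOfDegree_of_card_maxDegreeVerts (h : #G.maxDegreeVerts = Fintype.card V) :
    G.IsRegularOfDegree G.maxDegree := fun v =>
  degree_of_mem_maxDegreeVerts (eq_univ_of_card _ h ▸ mem_univ v)

lemma IsRegularOfDegree.two_mul_card_edgeFinset {d : ℕ} (hG : G.IsRegularOfDegree d) :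
    2 * #G.edgeFinset = Fintype.card V * d := by
  rw [← sum_degrees_eq_twice_card_edges, sum_congr rfl fun v _ => hG.degree_eq v, sum_const,
    card_univ, smul_eq_mul]

variable [DecidableEq V]

lemma degIn_add_degOut (S : Finset V) (v : V) : G.degIn S v + G.degOut S v = G.degree v := by
  rw [degIn, degOut, ← card_union_of_disjoint (disjoint_filter_filter disjoint_compl_right),
    ← filter_union, union_compl, ← card_neighborFinset_eq_degree]
  congr 1
  ext u
  simp

lemma degIn_univ (v : V) : G.degIn univ v = G.degree v := by
  rw [degIn, ← card_neighborFinset_eq_degree]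
  congr 1
  ext u
  simp

lemma degOut_univ (v : V) : G.degOut univ v = 0 := by
  simp [degOut]

lemma degOut_le_card_compl (S : Finset V) (v : V) : G.degOut S v ≤ #Sᶜ :=
  card_filter_le _ _

lemma degree_le_degIn_add_card_compl (S : Finset V) (v : V) :
    G.degree v ≤ G.degIn S v + #Sᶜ := by
  have := G.degIn_add_degOut S v
  have := G.degOut_le_card_compl S v
  omega

lemma degOut_eq_card_compl_iff {S : Finset V} {v : V} :
    G.degOut S v = #Sᶜ ↔ Sᶜ ⊆ G.neighborFinset v := by
  rw [degOut, card_filter_eq_iff]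
  simp [Finset.subset_iff]

lemma card_filter_not_adj (S : Finset V) (v : V) :
    #(S.filter (¬G.Adj v ·)) = #S - G.degIn S v := by
  rw [degIn, ← S.card_filter_add_card_filter_not (G.Adj v ·), Nat.add_sub_cancel_left]

lemma degIn_erase_add_one {S : Finset V} {u v : V} (hu : u ∈ S) (h : G.Adj v u) :
    G.degIn (S.erase u) v + 1 = G.degIn S v := by
  rw [degIn, degIn, filter_erase, card_erase_add_one (mem_filter.2 ⟨hu, h⟩)]

lemma degIn_erase_of_not_adj {S : Finset V} {u v : V} (h : ¬G.Adj v u) :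
    G.degIn (S.erase u) v = G.degIn S v := by
  rw [degIn, degIn, filter_erase, erase_eq_of_notMem (fun hu => h (mem_filter.1 hu).2)]

lemma degIn_componentIn {S : Finset V} {a x : V} (hx : x ∈ G.componentIn S a) :
    G.degIn (G.componentIn S a) x = G.degIn S x := by
  refine congrArg card (Subset.antisymm (filter_subset_filter _ componentIn_subset) ?_)
  intro y hy
  rw [mem_filter] at hy ⊢
  exact ⟨mem_componentIn_of_adj hx hy.1 hy.2, hy.2⟩

lemma eq_singleton_of_degIn_eq_zero {S : Finset V} {v : V}
    (hS : (G.induce (S : Set V)).Connected) (hv : v ∈ S) (h : G.degIn S v = 0) : S = {v} := by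
  refine eq_singleton_iff_unique_mem.2 ⟨hv, fun u hu => ?_⟩
  rcases Relation.ReflTransGen.cases_head
    ((connected_induce_iff_reachableIn.1 hS).2 v hv u hu) with rfl | ⟨c, hvc, -⟩
  · rfl
  · rw [degIn, card_eq_zero, filter_eq_empty_iff] at h
    exact absurd hvc.2.2 (h hvc.2.1)

lemma exists_isExactAlliance {S : Finset V} (h : (G.induce (S : Set V)).Connected) :
    ∃ k, G.IsExactAlliance S k := by
  obtain ⟨v, hv, hmin⟩ := S.exists_min_image (fun v => (G.degIn S v : ℤ) - G.degOut S v)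
    (connected_induce_iff_reachableIn.1 h).1
  exact ⟨_, h, hmin, v, hv, rfl⟩

namespace IsExactAlliance

variable {S : Finset V} {k : ℤ}

lemma eq {k' : ℤ} (h : G.IsExactAlliance S k) (h' : G.IsExactAlliance S k') : k = k' := by
  obtain ⟨v, hv, rfl⟩ := h.2.2
  obtain ⟨v', hv', rfl⟩ := h'.2.2
  exact le_antisymm (h.2.1 v' hv') (h'.2.1 v hv)

lemma neg_maxDegree_le (h : G.IsExactAlliance S k) : -(G.maxDegree : ℤ) ≤ k := by
  obtain ⟨v, -, rfl⟩ := h.2.2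
  have := G.degIn_add_degOut S v
  have := G.degree_le_maxDegree v
  omega

lemma le_maxDegree (h : G.IsExactAlliance S k) : k ≤ G.maxDegree := by
  obtain ⟨v, -, rfl⟩ := h.2.2
  have := G.degIn_add_degOut S v
  have := G.degree_le_maxDegree v
  omega

end IsExactAlliance

lemma isExactAlliance_neg_maxDegree_iff {S : Finset V} :
    G.IsExactAlliance S (-G.maxDegree) ↔ ∃ v, G.degree v = G.maxDegree ∧ S = {v} := by
  constructor
  · rintro ⟨hS, -, v, hv, hval⟩
    have := G.degIn_add_degOut S v
    have := G.degree_le_maxDegree v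
    exact ⟨v, by omega, eq_singleton_of_degIn_eq_zero hS hv (by omega)⟩
  · rintro ⟨v, hdeg, rfl⟩
    have hval : (G.degIn {v} v : ℤ) - G.degOut {v} v = -G.maxDegree := by
      have h0 : G.degIn {v} v = 0 := by simp [degIn]
      have := G.degIn_add_degOut {v} v
      omega
    refine ⟨connected_induce_singleton v, ?_, v, mem_singleton_self v, hval⟩
    simp only [mem_singleton, forall_eq, hval, le_refl]

lemma allianceCoeff_eq_zero_iff {k : ℤ} :
    G.allianceCoeff k = 0 ↔ ∀ S, ¬G.IsExactAlliance S k := by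
  rw [allianceCoeff, Set.ncard_eq_zero (Set.toFinite _), Set.eq_empty_iff_forall_notMem]
  rfl

lemma allianceCoeff_ne_zero_iff {k : ℤ} :
    G.allianceCoeff k ≠ 0 ↔ ∃ S, G.IsExactAlliance S k := by
  simp [allianceCoeff_eq_zero_iff]

lemma allianceCoeff_eq_one_iff {k : ℤ} :
    G.allianceCoeff k = 1 ↔ ∃ S, ∀ T, G.IsExactAlliance T k ↔ T = S := by
  rw [allianceCoeff, Set.ncard_eq_one]
  simp [Set.ext_iff]

lemma allianceCoeff_eq_zero_of_notMem_Icc {k : ℤ}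
    (hk : k ∉ Icc (-(G.maxDegree : ℤ)) G.maxDegree) : G.allianceCoeff k = 0 :=
  allianceCoeff_eq_zero_iff.2 fun _ h => hk (mem_Icc.2 ⟨h.neg_maxDegree_le, h.le_maxDegree⟩)

lemma allianceCoeff_neg_maxDegree : G.allianceCoeff (-G.maxDegree) = #G.maxDegreeVerts := by
  have : {S : Finset V | G.IsExactAlliance S (-G.maxDegree)}
      = (fun v => {v}) '' (G.maxDegreeVerts : Set V) := by
    ext S
    simp [isExactAlliance_neg_maxDegree_iff, maxDegreeVerts, eq_comm]
  rw [allianceCoeff, this, Set.ncard_image_of_injective _ singleton_injective,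
    Set.ncard_coe_finset]

lemma coeff_alliancePoly (m : ℕ) :
    G.alliancePoly.coeff m = G.allianceCoeff (m - Fintype.card V) := by
  have hΔ := G.maxDegree_le_card
  rw [alliancePoly, finsetSum_coeff]
  simp only [coeff_smul, coeff_X_pow, smul_eq_mul, mul_ite, mul_one, mul_zero]
  rw [sum_congr rfl fun k hk => if_congr (show m = ((Fintype.card V : ℤ) + k).toNat ↔
    k = m - Fintype.card V by rw [mem_Icc] at hk; omega) rfl rfl, sum_ite_eq']
  split_ifs with hm
  · rfl
  · rw [allianceCoeff_eq_zero_of_notMem_Icc hm, Nat.cast_zero]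

lemma eval_one_alliancePoly :
    G.alliancePoly.eval 1 = {S : Finset V | (G.induce (S : Set V)).Connected}.ncard := by
  classical
  have hcoeff : ∀ k, G.allianceCoeff k = #{S | G.IsExactAlliance S k} := fun k => by
    rw [allianceCoeff, ← Set.ncard_coe_finset, coe_filter_univ]
  have hunion : {S : Finset V | (G.induce (S : Set V)).Connected} =
      ↑((Icc (-(G.maxDegree : ℤ)) G.maxDegree).biUnion fun k => {S | G.IsExactAlliance S k}) := by
    ext S
    simp only [Set.mem_ofPred_eq, coe_biUnion, coe_Icc, coe_filter_univ, Set.mem_iUnion,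
      Set.mem_Icc, exists_prop]
    refine ⟨fun hS => ?_, fun ⟨_, _, hk⟩ => hk.1⟩
    obtain ⟨k, hk⟩ := exists_isExactAlliance hS
    exact ⟨k, ⟨hk.neg_maxDegree_le, hk.le_maxDegree⟩, hk⟩
  rw [hunion, Set.ncard_coe_finset, card_biUnion fun k _ l _ hkl => disjoint_filter.2
    fun S _ hk hl => hkl (hk.eq hl)]
  simp [alliancePoly, eval_finsetSum, hcoeff]

lemma allianceCoeff_eq_of_alliancePoly_eq {W : Type*} [Fintype W] [DecidableEq W]
    {H : SimpleGraph W} [DecidableRel H.Adj] (h : H.alliancePoly = G.alliancePoly) (k : ℤ) :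
    H.allianceCoeff k = G.allianceCoeff (k + (Fintype.card W - Fintype.card V)) := by
  have hG := G.maxDegree_le_card
  have hH := H.maxDegree_le_card
  by_cases hk : 0 ≤ (Fintype.card W : ℤ) + k
  · have hm := congrArg (coeff · ((Fintype.card W : ℤ) + k).toNat) h
    simp only [coeff_alliancePoly, Nat.cast_inj] at hm
    convert hm using 2 <;> omega
  · rw [allianceCoeff_eq_zero_of_notMem_Icc (by rw [mem_Icc]; omega),
      allianceCoeff_eq_zero_of_notMem_Icc (by rw [mem_Icc]; omega)]

/-- A disconnected `S ∋ a` has a vertex `b` outside the component of `a`; such a `b` is not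
adjacent to `a`, and `card_filter_mem_sdiff_componentIn_le` counts the sets with a given `b`. -/
lemma ncard_not_connected_le {Ω : Finset V} {a : V} (ha : a ∈ Ω) (r : ℕ)
    (hr : ∀ b ∈ Ω, ¬G.Adj a b → r ≤ G.degIn Ω b) :
    {S : Finset V | S ⊆ Ω ∧ a ∈ S ∧ ¬(G.induce (S : Set V)).Connected}.ncard ≤
      (#Ω - 1 - r) * 4 ^ (#Ω - 2 - r) := by
  classical
  set Z := (Ω.filter (¬G.Adj a ·)).erase a
  have hfilter : ∀ b ∈ Ω, ¬G.Adj a b → #(Ω.filter (¬G.Adj b ·)) ≤ #Ω - r := fun b hb hab => by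
    rw [card_filter_not_adj]
    have := hr b hb hab
    omega
  have hZ : #Z ≤ #Ω - 1 - r := by
    have := hfilter a ha G.irrefl
    rw [card_erase_of_mem (mem_filter.2 ⟨ha, G.irrefl⟩)]
    omega
  have hcover : {S : Finset V | S ⊆ Ω ∧ a ∈ S ∧ ¬(G.induce (S : Set V)).Connected} ⊆
      ↑(Z.biUnion fun b => Ω.powerset.filter fun S => a ∈ S ∧ b ∈ S \ G.componentIn S a) := by
    rintro S ⟨hSΩ, haS, hS⟩
    obtain ⟨b, hb⟩ : (S \ G.componentIn S a).Nonempty := by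
      rw [sdiff_nonempty]
      intro hsub
      exact hS (Subset.antisymm componentIn_subset hsub ▸ connected_induce_componentIn haS)
    have haK := self_mem_componentIn (G := G) haS
    obtain ⟨hbS, hbK⟩ := mem_sdiff.1 hb
    simp only [coe_biUnion, Set.mem_iUnion, coe_filter, mem_powerset, Set.mem_ofPred_eq,
      mem_coe, Z, mem_erase, mem_filter, exists_prop]
    exact ⟨b, ⟨fun hba => hbK (hba ▸ haK), hSΩ hbS,
      fun hab => hbK (mem_componentIn_of_adj haK hbS hab)⟩, hSΩ, haS, hb⟩
  refine (Set.ncard_le_ncard hcover (Set.toFinite _)).trans ?_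
  rw [Set.ncard_coe_finset]
  refine (card_biUnion_le_card_mul _ _ _ fun b hb => ?_).trans (Nat.mul_le_mul_right _ hZ)
  obtain ⟨hba, hbΩ, hab⟩ : b ≠ a ∧ b ∈ Ω ∧ ¬G.Adj a b := by simpa [Z] using hb
  refine (card_filter_mem_sdiff_componentIn_le Ω a b).trans ?_
  rw [show 4 = 2 * 2 from rfl, mul_pow]
  refine Nat.mul_le_mul (Nat.pow_le_pow_right two_pos ?_) (Nat.pow_le_pow_right two_pos ?_)
  · have := hfilter b hbΩ hab
    rw [card_erase_of_mem (mem_erase.2 ⟨hba.symm, mem_filter.2 ⟨ha, fun h => hab h.symm⟩⟩),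
      card_erase_of_mem (mem_filter.2 ⟨hbΩ, G.irrefl⟩)]
    omega
  · rw [card_erase_of_mem hb]
    omega

lemma ncard_not_connected_erase_le {a c : V} (hac : G.Adj a c) {r : ℕ}
    (hdeg : ∀ x, ¬G.Adj a x → r + 1 ≤ G.degree x) :
    {S : Finset V | S ⊆ univ.erase c ∧ a ∈ S ∧ ¬(G.induce (S : Set V)).Connected}.ncard ≤
      (Fintype.card V - 2 - r) * 4 ^ (Fintype.card V - 3 - r) := by
  have hΩ : #(univ.erase c) = Fintype.card V - 1 := by
    rw [card_erase_of_mem (mem_univ c), card_univ]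
  refine (ncard_not_connected_le (mem_erase.2 ⟨hac.ne, mem_univ a⟩) r fun b _ hab => ?_).trans
    (le_of_eq (by rw [hΩ]; congr 2))
  have := G.degree_le_degIn_add_card_compl (univ.erase c) b
  rw [compl_erase, compl_univ, insert_empty, card_singleton] at this
  have := hdeg b hab
  omega

/-- The union bound on the disconnected sets used here beats `2 ^ (|V| - 1)` only up to eleven
vertices. -/
lemma two_pow_le_ncard_connected_of_dominating_adj {v₁ v₂ w : V} (h₁₂ : G.Adj v₁ v₂)
    (hdom : ∀ x, x ≠ v₁ → x ≠ v₂ → G.Adj v₁ x ∨ G.Adj v₂ x)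
    (hw₁ : G.Adj w v₁) (hw₂ : G.Adj w v₂) (hdeg : ∀ x, x ≠ w → G.degree x = 6)
    (hcard : Fintype.card V ≤ 11) :
    2 ^ (Fintype.card V - 1) ≤ {S : Finset V | (G.induce (S : Set V)).Connected}.ncard := by
  have hcover : {S : Finset V | ¬(G.induce (S : Set V)).Connected} ⊆
      ↑(((univ.erase v₁).erase v₂).powerset.erase {w}) ∪
        {S | S ⊆ univ.erase v₂ ∧ v₁ ∈ S ∧ ¬(G.induce (S : Set V)).Connected} ∪
        {S | S ⊆ univ.erase v₁ ∧ v₂ ∈ S ∧ ¬(G.induce (S : Set V)).Connected} := by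
    intro S hS
    by_cases h₁ : v₁ ∈ S <;> by_cases h₂ : v₂ ∈ S
    · exact absurd (connected_induce_of_adj_of_forall_adj h₁₂ hdom h₁ h₂) hS
    · exact Or.inl (Or.inr ⟨fun x hx => mem_erase.2 ⟨fun h => h₂ (h ▸ hx), mem_univ x⟩, h₁, hS⟩)
    · exact Or.inr ⟨fun x hx => mem_erase.2 ⟨fun h => h₁ (h ▸ hx), mem_univ x⟩, h₂, hS⟩
    · refine Or.inl (Or.inl ?_)
      simp only [mem_coe, mem_erase, mem_powerset]
      refine ⟨fun h => hS (h ▸ connected_induce_singleton w), fun x hx => ?_⟩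
      exact mem_erase.2 ⟨fun h => h₂ (h ▸ hx), mem_erase.2 ⟨fun h => h₁ (h ▸ hx), mem_univ x⟩⟩
  have hA : #(((univ.erase v₁).erase v₂).powerset.erase {w}) = 2 ^ (Fintype.card V - 2) - 1 := by
    have hw : {w} ∈ ((univ.erase v₁).erase v₂).powerset := by simp [hw₁.ne, hw₂.ne]
    rw [card_erase_of_mem hw, card_powerset,
      card_erase_of_mem (mem_erase.2 ⟨h₁₂.ne.symm, mem_univ _⟩), card_erase_of_mem (mem_univ _),
      card_univ, Nat.sub_sub]
  have hdeg' : ∀ {a}, G.Adj w a → ∀ x, ¬G.Adj a x → 5 + 1 ≤ G.degree x := fun hwa x hax =>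
    (hdeg x fun hxw => hax (hxw ▸ hwa.symm)).ge
  have hnot := (Set.ncard_le_ncard hcover (Set.toFinite _)).trans <|
    (Set.ncard_union_le _ _).trans <| add_le_add ((Set.ncard_union_le _ _).trans <|
      add_le_add (Set.ncard_coe_finset _).le (ncard_not_connected_erase_le h₁₂ (hdeg' hw₁)))
      (ncard_not_connected_erase_le h₁₂.symm (hdeg' hw₂))
  have htotal := Set.ncard_add_ncard_compl {S : Finset V | (G.induce (S : Set V)).Connected}
  rw [Nat.card_eq_fintype_card, Fintype.card_finset, Set.compl_ofPred] at htotal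
  rw [hA] at hnot
  have : 2 ≤ Fintype.card V := one_lt_card.2 ⟨v₁, mem_univ _, v₂, mem_univ _, h₁₂.ne⟩
  generalize Fintype.card V = p at *
  interval_cases p <;> omega

def maxDegreeHubs (G : SimpleGraph V) [DecidableRel G.Adj] : Finset V :=
  G.maxDegreeVerts.filter fun v => G.maxDegreeVertsᶜ ⊆ G.neighborFinset v

lemma degIn_of_mem_maxDegreeHubs {v : V} (hv : v ∈ G.maxDegreeHubs) :
    G.degIn G.maxDegreeVerts v + #G.maxDegreeVertsᶜ = G.maxDegree := by
  obtain ⟨hv, hN⟩ := mem_filter.1 hv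
  rw [← degOut_eq_card_compl_iff.2 hN, degIn_add_degOut, degree_of_mem_maxDegreeVerts hv]

/-- The alliance values of a graph sharing its alliance polynomial with a connected `d`-regular
graph of `s` fewer vertices, where `t = d - s`. -/
structure UniqueTopAlliance (G : SimpleGraph V) [DecidableRel G.Adj] (t : ℤ) : Prop where
  eq_or_le : ∀ {S k}, G.IsExactAlliance S k → k = t ∨ k ≤ t - 2
  eq_of_isExactAlliance : ∀ {S T}, G.IsExactAlliance S t → G.IsExactAlliance T t → S = T

namespace UniqueTopAlliance

variable {t : ℤ}

lemma isExactAlliance_maxDegreeVerts (h : G.UniqueTopAlliance t)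
    (hD : (G.maxDegree : ℤ) = t + 2 * #G.maxDegreeVertsᶜ) (hne : G.maxDegreeVerts.Nonempty) :
    G.IsExactAlliance G.maxDegreeVerts t := by
  have hcomp : ∀ x ∈ G.maxDegreeVerts,
      G.IsExactAlliance (G.componentIn G.maxDegreeVerts x) t := by
    intro x hx
    obtain ⟨k, hk⟩ := exists_isExactAlliance (connected_induce_componentIn (G := G) hx)
    obtain ⟨y, hy, hval⟩ := hk.2.2
    have := G.degIn_add_degOut (G.componentIn G.maxDegreeVerts x) y
    have := G.degree_le_degIn_add_card_compl G.maxDegreeVerts y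
    rw [degIn_componentIn hy, degree_of_mem_maxDegreeVerts (componentIn_subset hy)] at *
    rcases h.eq_or_le hk with rfl | hle
    · exact hk
    · omega
  obtain ⟨x, hx⟩ := hne
  suffices G.componentIn G.maxDegreeVerts x = G.maxDegreeVerts from this ▸ hcomp x hx
  refine Subset.antisymm componentIn_subset fun u hu => ?_
  rw [h.eq_of_isExactAlliance (hcomp x hx) (hcomp u hu)]
  exact self_mem_componentIn hu

lemma maxDegreeHubs_nonempty (h : G.UniqueTopAlliance t)
    (hD : (G.maxDegree : ℤ) = t + 2 * #G.maxDegreeVertsᶜ) (hne : G.maxDegreeVerts.Nonempty) :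
    G.maxDegreeHubs.Nonempty := by
  obtain ⟨y, hy, hval⟩ := (h.isExactAlliance_maxDegreeVerts hD hne).2.2
  have := G.degIn_add_degOut G.maxDegreeVerts y
  rw [degree_of_mem_maxDegreeVerts hy] at this
  exact ⟨y, mem_filter.2 ⟨hy, degOut_eq_card_compl_iff.1 (by omega)⟩⟩

/-- A component of the maximum-degree vertices other than `u` has alliance value at least
`t - 2`; it is not the top alliance, so its value `t - 2` is attained at a hub adjacent to `u`. -/
lemma exists_mem_maxDegreeHubs_adj (h : G.UniqueTopAlliance t)
    (hD : (G.maxDegree : ℤ) = t + 2 * #G.maxDegreeVertsᶜ) (h1 : 1 < #G.maxDegreeVerts)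
    {u : V} (hu : u ∈ G.maxDegreeVerts) : ∃ v ∈ G.maxDegreeHubs, G.Adj v u := by
  obtain ⟨x, hx⟩ : (G.maxDegreeVerts.erase u).Nonempty := by
    rw [← card_pos, card_erase_of_mem hu]
    omega
  obtain ⟨k, hk⟩ := exists_isExactAlliance (connected_induce_componentIn (G := G) hx)
  have hkt : k ≤ t - 2 := by
    refine (h.eq_or_le hk).resolve_left fun hkt => ?_
    subst hkt
    have hC := h.eq_of_isExactAlliance hk (h.isExactAlliance_maxDegreeVerts hD ⟨u, hu⟩)
    exact (mem_erase.1 (componentIn_subset (hC ▸ hu))).1 rfl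
  obtain ⟨y, hyC, hval⟩ := hk.2.2
  obtain ⟨hyu, hySt⟩ := mem_erase.1 (componentIn_subset hyC)
  have hC := G.degIn_add_degOut (G.componentIn (G.maxDegreeVerts.erase u) x) y
  have hSt := G.degIn_add_degOut G.maxDegreeVerts y
  have hout := G.degOut_le_card_compl G.maxDegreeVerts y
  rw [degIn_componentIn hyC, degree_of_mem_maxDegreeVerts hySt] at hC
  rw [degIn_componentIn hyC] at hval
  rw [degree_of_mem_maxDegreeVerts hySt] at hSt
  by_cases hadj : G.Adj y u
  · have := degIn_erase_add_one hu hadj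
    exact ⟨y, mem_filter.2 ⟨hySt, degOut_eq_card_compl_iff.1 (by omega)⟩, hadj⟩
  · rw [degIn_erase_of_not_adj hadj] at hC hval
    omega

/-- The whole vertex set is an alliance other than the top one; its value is the minimum degree,
attained at a vertex of lower degree, which is adjacent to every hub. -/
lemma card_maxDegreeHubs_le (h : G.UniqueTopAlliance t)
    (hD : (G.maxDegree : ℤ) = t + 2 * #G.maxDegreeVertsᶜ) (hne : G.maxDegreeVerts.Nonempty)
    (hlow : G.maxDegreeVertsᶜ.Nonempty) : (#G.maxDegreeHubs : ℤ) ≤ t - 2 := by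
  have hSt := h.isExactAlliance_maxDegreeVerts hD hne
  obtain ⟨v₀, hv₀⟩ := h.maxDegreeHubs_nonempty hD hne
  obtain ⟨hv₀St, hv₀N⟩ := mem_filter.1 hv₀
  have hconn : (G.induce ((univ : Finset V) : Set V)).Connected := by
    refine connected_induce_of_forall_reachableIn (mem_univ v₀) fun x _ => ?_
    by_cases hx : x ∈ G.maxDegreeVerts
    · exact ((connected_induce_iff_reachableIn.1 hSt.1).2 v₀ hv₀St x hx).mono (subset_univ _)
    · exact .single (mem_univ v₀) (mem_univ x) (by simpa using hv₀N (mem_compl.2 hx))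
  obtain ⟨k, hk⟩ := exists_isExactAlliance hconn
  obtain ⟨u, -, hval⟩ := hk.2.2
  rw [degIn_univ, degOut_univ, Nat.cast_zero, sub_zero] at hval
  have hkt : k ≤ t - 2 := (h.eq_or_le hk).resolve_left fun hkt => by
    obtain ⟨w, hw⟩ := hlow
    exact mem_compl.1 hw ((h.eq_of_isExactAlliance (hkt ▸ hk) hSt) ▸ mem_univ w)
  have hu : u ∈ G.maxDegreeVertsᶜ := by
    refine mem_compl.2 fun hu => ?_
    have := card_pos.2 hlow
    rw [degree_of_mem_maxDegreeVerts hu] at hval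
    omega
  have hsub : G.maxDegreeHubs ⊆ G.neighborFinset u := fun v hv => by
    simpa [adj_comm] using (mem_filter.1 hv).2 hu
  have := card_le_card hsub
  rw [card_neighborFinset_eq_degree] at this
  omega

lemma card_maxDegreeVerts_le (h : G.UniqueTopAlliance t)
    (hD : (G.maxDegree : ℤ) = t + 2 * #G.maxDegreeVertsᶜ) (h1 : 1 < #G.maxDegreeVerts) :
    #G.maxDegreeVerts ≤ #G.maxDegreeHubs * (G.maxDegree - #G.maxDegreeVertsᶜ) := by
  have hcover : G.maxDegreeVerts ⊆
      G.maxDegreeHubs.biUnion fun v => G.maxDegreeVerts.filter fun u => G.Adj v u :=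
    fun u hu => by
      obtain ⟨v, hv, hvu⟩ := h.exists_mem_maxDegreeHubs_adj hD h1 hu
      exact mem_biUnion.2 ⟨v, hv, mem_filter.2 ⟨hu, hvu⟩⟩
  refine (card_le_card hcover).trans (card_biUnion_le_card_mul _ _ _ fun v hv => ?_)
  exact Nat.le_sub_of_add_le (degIn_of_mem_maxDegreeHubs hv).le

lemma card_maxDegreeHubs_eq_two (h : G.UniqueTopAlliance t)
    (hD : (G.maxDegree : ℤ) = t + 2 * #G.maxDegreeVertsᶜ) (hlow : G.maxDegreeVertsᶜ.Nonempty)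
    (hd : t + #G.maxDegreeVertsᶜ < #G.maxDegreeVerts) (hd5 : t + #G.maxDegreeVertsᶜ ≤ 5) :
    #G.maxDegreeHubs = 2 ∧ #G.maxDegreeVertsᶜ = 1 ∧ G.maxDegree = 6 ∧ #G.maxDegreeVerts ≤ 10 := by
  have : Nonempty V := ⟨hlow.choose⟩
  have hne := G.maxDegreeVerts_nonempty
  have hhubs := h.card_maxDegreeHubs_le hD hne hlow
  have := card_pos.2 (h.maxDegreeHubs_nonempty hD hne)
  have := card_pos.2 hlow
  have hcover := h.card_maxDegreeVerts_le hD (by omega)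
  have : #G.maxDegreeHubs ≤ 2 := by omega
  interval_cases #G.maxDegreeHubs <;> omega

lemma two_pow_le_ncard_connected (h : G.UniqueTopAlliance t)
    (hD : (G.maxDegree : ℤ) = t + 2 * #G.maxDegreeVertsᶜ) (hlow : G.maxDegreeVertsᶜ.Nonempty)
    (hd : t + #G.maxDegreeVertsᶜ < #G.maxDegreeVerts) (hd5 : t + #G.maxDegreeVertsᶜ ≤ 5) :
    2 ^ (Fintype.card V - 1) ≤ {S : Finset V | (G.induce (S : Set V)).Connected}.ncard := by
  obtain ⟨hhubs2, hlow1, hD6, hcard⟩ := h.card_maxDegreeHubs_eq_two hD hlow hd hd5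
  obtain ⟨v₁, v₂, -, hhubs⟩ := card_eq_two.1 hhubs2
  obtain ⟨w, hw⟩ := card_eq_one.1 hlow1
  have hmem : ∀ x, x ≠ w → x ∈ G.maxDegreeVerts := fun x hx => by
    by_contra hx'
    exact hx (mem_singleton.1 (hw ▸ mem_compl.2 hx'))
  have hadj_w : ∀ v ∈ G.maxDegreeHubs, G.Adj w v := fun v hv => by
    simpa [adj_comm] using ((mem_filter.1 hv).2 (hw ▸ mem_singleton_self w) :)
  have hdom : ∀ x, x ≠ w → G.Adj v₁ x ∨ G.Adj v₂ x := fun x hx => by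
    obtain ⟨v, hv, hvx⟩ := h.exists_mem_maxDegreeHubs_adj hD (by omega) (hmem x hx)
    rw [hhubs, mem_insert, mem_singleton] at hv
    rcases hv with rfl | rfl
    exacts [Or.inl hvx, Or.inr hvx]
  have hw₁ := hadj_w v₁ (hhubs ▸ mem_insert_self v₁ {v₂})
  have hw₂ := hadj_w v₂ (hhubs ▸ mem_insert_of_mem (mem_singleton_self v₂))
  have h₁₂ : G.Adj v₁ v₂ := ((hdom v₁ hw₁.ne.symm).resolve_left G.irrefl).symm
  refine two_pow_le_ncard_connected_of_dominating_adj h₁₂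
    (fun x _ _ => if hxw : x = w then .inl (hxw ▸ hw₁.symm) else hdom x hxw) hw₁ hw₂
    (fun x hx => by rw [degree_of_mem_maxDegreeVerts (hmem x hx), hD6]) ?_
  have := card_le_univ G.maxDegreeVerts
  rw [card_compl] at hlow1
  omega

end UniqueTopAlliance

namespace IsRegularOfDegree

variable {d : ℕ} {W : Type*} [Fintype W] [DecidableEq W] {H : SimpleGraph W} [DecidableRel H.Adj]

lemma allianceCoeff_neg [Nonempty V] (hG : G.IsRegularOfDegree d) :
    G.allianceCoeff (-d) = Fintype.card V := by
  have : G.maxDegreeVerts = univ := by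
    simp [maxDegreeVerts, hG.maxDegree_eq, hG.degree_eq]
  rw [← hG.maxDegree_eq, allianceCoeff_neg_maxDegree, this, card_univ]

lemma even_add_of_isExactAlliance (hG : G.IsRegularOfDegree d) {S : Finset V} {k : ℤ}
    (h : G.IsExactAlliance S k) : Even (k + d) := by
  obtain ⟨v, -, rfl⟩ := h.2.2
  have := G.degIn_add_degOut S v
  rw [hG.degree_eq] at this
  exact ⟨G.degIn S v, by omega⟩

lemma isExactAlliance_iff_eq_univ (hG : G.IsRegularOfDegree d) (hconn : G.Connected)
    {S : Finset V} : G.IsExactAlliance S d ↔ S = univ := by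
  constructor
  · intro h
    obtain ⟨a, ha⟩ := (connected_induce_iff_reachableIn.1 h.1).1
    refine eq_univ_of_forall_adj_mem hconn ha fun x hx y hxy => ?_
    have hout : G.degOut S x = 0 := by
      have := h.2.1 x hx
      have := G.degIn_add_degOut S x
      rw [hG.degree_eq] at this
      omega
    by_contra hy
    rw [degOut, card_eq_zero, filter_eq_empty_iff] at hout
    exact hout (mem_compl.2 hy) hxy
  · rintro rfl
    have hval : ∀ v, (G.degIn univ v : ℤ) - G.degOut univ v = d := fun v => by
      rw [degIn_univ, degOut_univ, hG.degree_eq]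
      simp
    obtain ⟨v⟩ := hconn.nonempty
    exact ⟨connected_induce_univ hconn, fun v _ => (hval v).ge, v, mem_univ v, hval v⟩

lemma allianceCoeff_eq_one (hG : G.IsRegularOfDegree d) (hconn : G.Connected) :
    G.allianceCoeff d = 1 :=
  allianceCoeff_eq_one_iff.2 ⟨univ, fun _ => hG.isExactAlliance_iff_eq_univ hconn⟩

lemma maxDegree_of_alliancePoly_eq [Nonempty V] (hG : G.IsRegularOfDegree d)
    (h : H.alliancePoly = G.alliancePoly) :
    (H.maxDegree : ℤ) = d + (Fintype.card W - Fintype.card V) ∧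
      #H.maxDegreeVerts = Fintype.card V := by
  have hcoeff := allianceCoeff_eq_of_alliancePoly_eq h
  obtain ⟨S, hS⟩ : ∃ S, H.IsExactAlliance S (-d - (Fintype.card W - Fintype.card V)) := by
    rw [← allianceCoeff_ne_zero_iff, hcoeff, sub_add_cancel, hG.allianceCoeff_neg]
    exact Nat.cast_ne_zero.2 Fintype.card_ne_zero
  obtain ⟨x, -⟩ := (connected_induce_iff_reachableIn.1 hS.1).1
  have : Nonempty W := ⟨x⟩
  obtain ⟨v, hv⟩ := H.maxDegreeVerts_nonempty
  obtain ⟨T, hT⟩ := allianceCoeff_ne_zero_iff.1 <| hcoeff (-H.maxDegree) ▸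
    allianceCoeff_neg_maxDegree (G := H) ▸ card_ne_zero_of_mem hv
  have hD : (H.maxDegree : ℤ) = d + (Fintype.card W - Fintype.card V) := by
    have := hS.neg_maxDegree_le
    have := hT.neg_maxDegree_le
    rw [hG.maxDegree_eq] at this
    omega
  refine ⟨hD, ?_⟩
  rw [← allianceCoeff_neg_maxDegree, hcoeff, hD, neg_add, neg_add_cancel_right,
    hG.allianceCoeff_neg]

lemma uniqueTopAlliance_of_alliancePoly_eq (hG : G.IsRegularOfDegree d) (hconn : G.Connected)
    (h : H.alliancePoly = G.alliancePoly) :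
    H.UniqueTopAlliance (d - (Fintype.card W - Fintype.card V)) := by
  have := hconn.nonempty
  have hcoeff := allianceCoeff_eq_of_alliancePoly_eq h
  refine ⟨fun {S k} hS => ?_, fun {S T} hS hT => ?_⟩
  · obtain ⟨T, hT⟩ := allianceCoeff_ne_zero_iff.1 <| hcoeff k ▸ allianceCoeff_ne_zero_iff.2 ⟨S, hS⟩
    have := hT.le_maxDegree
    obtain ⟨m, hm⟩ := hG.even_add_of_isExactAlliance hT
    rw [hG.maxDegree_eq] at this
    omega
  · obtain ⟨S₀, hS₀⟩ := allianceCoeff_eq_one_iff.1 <| by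
      rw [hcoeff, sub_add_cancel]
      exact hG.allianceCoeff_eq_one hconn
    rw [(hS₀ S).1 hS, (hS₀ T).1 hT]

end IsRegularOfDegree

end

end SimpleGraph

/-- If `G` is a connected Δ-regular graph with `Δ ≤ 5` and `G*` has the same
alliance polynomial, then `G*` is Δ-regular with the same order and size as `G`. -/
theorem alliancePoly_determines_connected_regular_degree_le_five
    {V W : Type*} [Fintype V] [DecidableEq V] [Fintype W] [DecidableEq W]
    (G : SimpleGraph V) [DecidableRel G.Adj] (Δ : ℕ) (hΔ : Δ ≤ 5)
    (hreg : G.IsRegularOfDegree Δ) (hconn : G.Connected)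
    (Gs : SimpleGraph W) [DecidableRel Gs.Adj]
    (h : Gs.alliancePoly = G.alliancePoly) :
    Gs.IsRegularOfDegree Δ ∧
    Fintype.card W = Fintype.card V ∧
    Gs.edgeFinset.card = G.edgeFinset.card := by
  have := hconn.nonempty
  obtain ⟨hD, hcard⟩ := hreg.maxDegree_of_alliancePoly_eq h
  have hlow : #Gs.maxDegreeVertsᶜ = Fintype.card W - Fintype.card V := by
    rw [card_compl, hcard]
  rcases (hcard ▸ card_le_univ _ : Fintype.card V ≤ Fintype.card W).eq_or_lt with hVW | hVW
  · have hreg' : Gs.IsRegularOfDegree Δ := by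
      have := SimpleGraph.isRegularOfDegree_of_card_maxDegreeVerts (hcard.trans hVW)
      rwa [show Gs.maxDegree = Δ by omega] at this
    have := hreg.two_mul_card_edgeFinset
    have := hreg'.two_mul_card_edgeFinset
    exact ⟨hreg', hVW.symm, by rw [← hVW] at this; omega⟩
  · exfalso
    have hTop : Gs.UniqueTopAlliance (Δ - #Gs.maxDegreeVertsᶜ) := by
      rw [hlow, Nat.cast_sub hVW.le]
      exact hreg.uniqueTopAlliance_of_alliancePoly_eq hconn h
    have hΔV : Δ < #Gs.maxDegreeVerts := hcard ▸ hreg.maxDegree_eq ▸ G.maxDegree_lt_card_verts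
    have hGs := hTop.two_pow_le_ncard_connected (by omega) (card_pos.1 (by omega))
      (by omega) (by omega)
    have heval := congrArg (Polynomial.eval 1) h
    rw [SimpleGraph.eval_one_alliancePoly, SimpleGraph.eval_one_alliancePoly, Nat.cast_inj]
      at heval
    exact ((hGs.trans_eq heval).trans_lt G.ncard_connected_lt).not_ge
      (Nat.pow_le_pow_right two_pos (Nat.le_sub_one_of_lt hVW))
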